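/- Let ψ_i(t) = (p_{x₁}(t)−p_s(t)) s(t) x_i(t)/(q_i C_i), where p_{x₁},p_s,s,x_i are Lipschitz continuous on [0,t_f] and q_i∈(1,2], C_i>0. Then the function u_i(t) = min{ (max{ψ_i(t),0})^{1/(q_i−1)}, ū_i } is Lipschitz continuous on [0,t_f]. If moreover p_{x₁}(t_f)=p_s(t_f)=0, then u_i(t_f)=0. -/
import Mathlib

/-- Product of two Lipschitz-on-s bounded real functions is Lipschitz on s. -/
lemma lip_mul_aux {f g : ℝ → ℝ} {S : Set ℝ} {Kf Kg : NNReal} {A B : ℝ}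
    (hf : LipschitzOnWith Kf f S) (hg : LipschitzOnWith Kg g S)
    (hA : ∀ x ∈ S, |f x| ≤ A) (hB : ∀ x ∈ S, |g x| ≤ B) :
    ∃ K : NNReal, LipschitzOnWith K (fun x => f x * g x) S := by
  refine ⟨(A * Kg + B * Kf).toNNReal, LipschitzOnWith.of_dist_le_mul ?_⟩
  intro x hx y hy
  have h1 : dist (f x * g x) (f y * g y) ≤ |f x| * dist (g x) (g y) + |g y| * dist (f x) (f y) := by
    have : f x * g x - f y * g y = f x * (g x - g y) + g y * (f x - f y) := by ring
    simp only [Real.dist_eq, this]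
    calc |f x * (g x - g y) + g y * (f x - f y)|
        ≤ |f x * (g x - g y)| + |g y * (f x - f y)| := abs_add_le _ _
      _ = |f x| * |g x - g y| + |g y| * |f x - f y| := by rw [abs_mul, abs_mul]
  have h2 : |f x| * dist (g x) (g y) ≤ A * (Kg * dist x y) := by
    have := hg.dist_le_mul x hx y hy
    exact mul_le_mul (hA x hx) this dist_nonneg ((abs_nonneg _).trans (hA x hx))
  have h3 : |g y| * dist (f x) (f y) ≤ B * (Kf * dist x y) := by
    have := hf.dist_le_mul x hx y hy
    exact mul_le_mul (hB y hy) this dist_nonneg ((abs_nonneg _).trans (hB y hy))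
  have : dist (f x * g x) (f y * g y) ≤ (A * Kg + B * Kf) * dist x y := by nlinarith
  refine this.trans (mul_le_mul_of_nonneg_right ?_ dist_nonneg)
  rw [Real.coe_toNNReal']
  exact le_max_left _ _

theorem stmt_7 (t_f : ℝ) (ht : 0 < t_f) (q C ubar : ℝ)
    (hq : q ∈ Set.Ioc 1 2) (hC : 0 < C) (hubar : 0 < ubar)
    (px ps s xi : ℝ → ℝ)
    (Lpx Lps Ls Lxi : NNReal)
    (hpx : LipschitzOnWith Lpx px (Set.Icc 0 t_f))
    (hps : LipschitzOnWith Lps ps (Set.Icc 0 t_f))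
    (hs : LipschitzOnWith Ls s (Set.Icc 0 t_f))
    (hxi : LipschitzOnWith Lxi xi (Set.Icc 0 t_f))
    (ψ u : ℝ → ℝ)
    (hψ : ∀ t, ψ t = (px t - ps t) * s t * xi t / (q * C))
    (hu : ∀ t, u t = min (max (ψ t) 0 ^ (1 / (q - 1))) ubar) :
    (∃ L : NNReal, LipschitzOnWith L u (Set.Icc 0 t_f)) ∧
    (px t_f = 0 → ps t_f = 0 → u t_f = 0) := by
  obtain ⟨hq1, hq2⟩ := hq
  set r : ℝ := 1 / (q - 1) with hr_def
  have hqs : 0 < q - 1 := by linarith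
  have hr1 : 1 ≤ r := by
    rw [hr_def, le_div_iff₀ hqs]; linarith
  have hr0 : 0 < r := lt_of_lt_of_le one_pos hr1
  set S : Set ℝ := Set.Icc 0 t_f with hS
  -- boundedness helper
  have bnd : ∀ (f : ℝ → ℝ), ContinuousOn f S → ∃ A : ℝ, ∀ x ∈ S, |f x| ≤ A := by
    intro f hf
    obtain ⟨A, hA⟩ := isCompact_Icc.exists_bound_of_continuousOn hf
    exact ⟨A, fun x hx => by simpa [Real.norm_eq_abs] using hA x hx⟩
  -- ψ is Lipschitz on S
  have hsub : LipschitzOnWith (Lpx + Lps) (fun t => px t - ps t) S := hpx.sub hps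
  obtain ⟨A1, hA1⟩ := bnd _ hsub.continuousOn
  obtain ⟨A2, hA2⟩ := bnd _ hs.continuousOn
  obtain ⟨A3, hA3⟩ := bnd _ hxi.continuousOn
  obtain ⟨K1, hK1⟩ := lip_mul_aux hsub hs hA1 hA2
  obtain ⟨A12, hA12⟩ := bnd _ hK1.continuousOn
  obtain ⟨K2, hK2⟩ := lip_mul_aux hK1 hxi hA12 hA3
  have hcst : LipschitzOnWith 0 (fun _ : ℝ => 1 / (q * C)) S :=
    (LipschitzWith.const _).lipschitzOnWith
  obtain ⟨A123, hA123⟩ := bnd _ hK2.continuousOn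
  obtain ⟨Kψ, hKψ⟩ := lip_mul_aux hK2 hcst hA123
    (fun x _ => le_refl _)
  have hψlip : LipschitzOnWith Kψ ψ S := by
    have : ψ = fun t => (px t - ps t) * s t * xi t * (1 / (q * C)) := by
      funext t; rw [hψ t]; ring
    rw [this]; exact hKψ
  -- max ψ 0 is Lipschitz and maps into Icc 0 M
  obtain ⟨M0, hM0⟩ := bnd _ hψlip.continuousOn
  set M : ℝ := max M0 0 with hM_def
  have hM0' : 0 ≤ M := le_max_right _ _
  have hmaxlip : LipschitzOnWith (1 * Kψ) (fun t => max (ψ t) 0) S :=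
    (LipschitzWith.id.max_const 0).comp_lipschitzOnWith hψlip
  have hmaps : Set.MapsTo (fun t => max (ψ t) 0) S (Set.Icc 0 M) := by
    intro x hx
    constructor
    · exact le_max_right _ _
    · refine max_le ?_ hM0'
      calc ψ x ≤ |ψ x| := le_abs_self _
        _ ≤ M0 := hM0 x hx
        _ ≤ M := le_max_left _ _
  -- x ↦ x ^ r is Lipschitz on Icc 0 M
  set M1 : ℝ := max M 1 with hM1_def
  have hM1 : 1 ≤ M1 := le_max_right _ _
  have hrpow : LipschitzOnWith (r * M1 ^ (r - 1)).toNNReal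
      (fun x : ℝ => x ^ r) (Set.Icc 0 M) := by
    apply (convex_Icc (0:ℝ) M).lipschitzOnWith_of_nnnorm_hasDerivWithin_le
      (f' := fun x => r * x ^ (r - 1))
    · intro x hx
      exact (Real.hasDerivAt_rpow_const (Or.inr hr1)).hasDerivWithinAt
    · intro x hx
      rw [← NNReal.coe_le_coe, coe_nnnorm, Real.coe_toNNReal']
      refine le_trans ?_ (le_max_left _ _)
      have hx0 : 0 ≤ x := hx.1
      have hxM1 : x ≤ M1 := le_trans hx.2 (le_max_left _ _)
      have hpow : x ^ (r - 1) ≤ M1 ^ (r - 1) :=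
        Real.rpow_le_rpow hx0 hxM1 (by linarith)
      have hnn : 0 ≤ r * x ^ (r - 1) :=
        mul_nonneg hr0.le (Real.rpow_nonneg hx0 _)
      rw [Real.norm_eq_abs, abs_of_nonneg hnn]
      exact mul_le_mul_of_nonneg_left hpow hr0.le
  -- compose everything
  have hcomp : LipschitzOnWith ((r * M1 ^ (r - 1)).toNNReal * (1 * Kψ))
      ((fun x : ℝ => x ^ r) ∘ (fun t => max (ψ t) 0)) S :=
    hrpow.comp hmaxlip hmaps
  have humin : LipschitzOnWith (1 * ((r * M1 ^ (r - 1)).toNNReal * (1 * Kψ))) u S := by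
    have hueq : u = (fun y : ℝ => min y ubar) ∘
        ((fun x : ℝ => x ^ r) ∘ (fun t => max (ψ t) 0)) := by
      funext t; simp [hu t, Function.comp]
    rw [hueq]
    exact (LipschitzWith.id.min_const ubar).comp_lipschitzOnWith hcomp
  refine ⟨⟨_, humin⟩, ?_⟩
  intro hpx0 hps0
  have hψ0 : ψ t_f = 0 := by rw [hψ, hpx0, hps0]; ring
  rw [hu, hψ0, max_self, Real.zero_rpow (by positivity)]
  exact min_eq_left hubar.le
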